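/- Let k be an algebraically closed field of characteristic p > 0. The map π : E_{≥0}(n, k) → Mat(n, k[T])^E sending the group homomorphism ρ = ρ_{N₁,...,N_r} : (Z/pZ)^r → GL(n, k) to the exponential matrix Π_{i=1}^r Exp(T^{p^{i-1}}·N_i) (and the unique homomorphism from the trivial group (Z/pZ)^0 to I_n) is surjective. -/

import Mathlib

open Polynomial

/-- `A(T) ∈ Mat(n, k[T])` is an exponential matrix: `A(T)·A(T') = A(T+T')` in
`Mat(n, k[T,T'])` and `A(0) = I_n`. -/
def IsExpMat {k : Type*} [Field k] {n : ℕ}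
    (A : Matrix (Fin n) (Fin n) (Polynomial k)) : Prop :=
  A.map (fun q => aeval ((C X + X : Polynomial (Polynomial k))) q) =
    A.map (fun q => aeval ((C X : Polynomial (Polynomial k))) q) *
      A.map (fun q => aeval (X : Polynomial (Polynomial k)) q) ∧
  A.map (fun q => q.eval 0) = 1

/-- `Exp(T^m · N) = ∑_{j=0}^{p-1} T^{m j} N^j / j!`. -/
noncomputable def expT (k : Type*) [Field k] (n p m : ℕ)
    (N : Matrix (Fin n) (Fin n) k) : Matrix (Fin n) (Fin n) (Polynomial k) :=
  ∑ j ∈ Finset.range p, (C ((j.factorial : k)⁻¹) * X ^ (m * j)) • ((N ^ j).map C)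

/-- Truncated exponential `Exp(N) = ∑_{i=0}^{p-1} N^i / i!`. -/
noncomputable def matExp (k : Type*) [Field k] (n p : ℕ)
    (N : Matrix (Fin n) (Fin n) k) : Matrix (Fin n) (Fin n) k :=
  ∑ i ∈ Finset.range p, (i.factorial : k)⁻¹ • N ^ i

/-!
Write `A = ∑ₘ Tᵐ Gₘ`. The exponential law says `G₀ = 1` and
`G_a G_b = (a+b choose a) G_{a+b}`. By Lucas's theorem this gives, in characteristic `p`,
`(G_{pᵗ})ʲ = j! G_{j pᵗ}`; hence `Nₜ := G_{pᵗ}` satisfies `Nₜᵖ = 0` and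
`Exp(T^{pᵗ} Nₜ) = ∑_{j<p} T^{j pᵗ} G_{j pᵗ}`. Lucas's theorem also gives
`G_m G_{pʳ j} = G_{m + pʳ j}` for `m < pʳ`, so expanding `∏_{t<r} Exp(T^{pᵗ} Nₜ)` along base-`p`
digits yields `∑_{m<pʳ} Tᵐ Gₘ = A` as soon as `pʳ` exceeds the degree of `A`. The `Nₜ` commute,
and `Exp(Nₜ)ᵖ = 1` by the Frobenius identity, so `ρ` is a homomorphism.
-/
open Finset

section Lucas

variable {k : Type*} [CommRing k] {p : ℕ} [Fact p.Prime] [CharP k p]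

theorem cast_choose_prime_pow_mul (t a b : ℕ) :
    ((p ^ t * a).choose (p ^ t * b) : k) = a.choose b :=
  (CharP.natCast_eq_natCast k p).mpr Choose.choose_pow_mul_pow_mul_modEq_choose_nat

theorem cast_choose_add_prime_pow_mul {r m : ℕ} (hm : m < p ^ r) (j : ℕ) :
    ((m + p ^ r * j).choose m : k) = 1 := by
  induction r generalizing m with
  | zero => simp [Nat.lt_one_iff.mp (by simpa using hm)]
  | succ r ih =>
    have hp : 0 < p := (Fact.out : p.Prime).pos
    have hmod : (m + p ^ (r + 1) * j) % p = m % p := by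
      rw [pow_succ, mul_right_comm, Nat.add_mul_mod_self_right]
    have hdiv : (m + p ^ (r + 1) * j) / p = m / p + p ^ r * j := by
      rw [pow_succ, mul_right_comm, Nat.add_mul_div_right _ _ hp]
    rw [(CharP.natCast_eq_natCast k p).mpr Choose.choose_modEq_choose_mod_mul_choose_div_nat,
      hmod, hdiv, Nat.choose_self, Nat.cast_mul,
      ih (Nat.div_lt_of_lt_mul (by rwa [mul_comm, ← pow_succ])), Nat.cast_one, one_mul]

end Lucas

theorem add_pow_char_of_commute_of_algebra {k R : Type*} [CommSemiring k] [Semiring R]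
    [Algebra k R] {p : ℕ} [Fact p.Prime] [CharP k p] {x y : R} (h : Commute x y) :
    (x + y) ^ p = x ^ p + y ^ p := by
  obtain ⟨c, hc⟩ := h.exists_add_pow_prime_eq (Fact.out : p.Prime)
  have hpR : (p : R) = 0 := by
    rw [← map_natCast (algebraMap k R), CharP.cast_eq_zero, map_zero]
  rw [hc, hpR, zero_mul, zero_mul, zero_mul, add_zero]

structure IsDividedPowerSeq (k : Type*) {R : Type*} [CommSemiring k] [Semiring R]
    [Algebra k R] (G : ℕ → R) : Prop where
  zero : G 0 = 1
  mul : ∀ a b, G a * G b = ((a + b).choose a : k) • G (a + b)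

namespace IsDividedPowerSeq

variable {k R : Type*} [CommRing k] [Ring R] [Algebra k R] {G : ℕ → R}

theorem commute (hG : IsDividedPowerSeq k G) (a b : ℕ) : Commute (G a) (G b) := by
  rw [Commute, SemiconjBy, hG.mul, hG.mul, add_comm b a, Nat.choose_symm_add]

variable {p : ℕ} [Fact p.Prime] [CharP k p]

theorem pow_prime_pow (hG : IsDividedPowerSeq k G) (t j : ℕ) :
    G (p ^ t) ^ j = (j.factorial : k) • G (p ^ t * j) := by
  induction j with
  | zero => simp [hG.zero]
  | succ j ih =>
    rw [pow_succ, ih, smul_mul_assoc, hG.mul, ← mul_add_one, cast_choose_prime_pow_mul,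
      smul_smul, Nat.choose_succ_self_right, Nat.factorial_succ, Nat.cast_mul, mul_comm]

theorem pow_prime_pow_prime (hG : IsDividedPowerSeq k G) (t : ℕ) : G (p ^ t) ^ p = 0 := by
  rw [hG.pow_prime_pow, (CharP.cast_eq_zero_iff k p _).mpr
    (Nat.dvd_factorial (Fact.out : p.Prime).pos le_rfl), zero_smul]

theorem mul_prime_pow_mul (hG : IsDividedPowerSeq k G) {r m : ℕ} (hm : m < p ^ r) (j : ℕ) :
    G m * G (p ^ r * j) = G (m + p ^ r * j) := by
  rw [hG.mul, cast_choose_add_prime_pow_mul hm, one_smul]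

end IsDividedPowerSeq

section TruncatedExp

variable {k : Type*} [Field k] {n p : ℕ}

theorem Commute.matExp {N N' : Matrix (Fin n) (Fin n) k} (h : Commute N N') :
    Commute (matExp k n p N) (matExp k n p N') :=
  .sum_left _ _ _ fun i _ => .sum_right _ _ _ fun j _ =>
    ((h.pow_pow i j).smul_left _).smul_right _

/-- `Exp(N) = 1 + N S` with `S` a polynomial in `N`, so `Exp(N) ^ p = 1 + N ^ p S ^ p` by
Frobenius. -/
theorem matExp_pow_prime [Fact p.Prime] [CharP k p] {N : Matrix (Fin n) (Fin n) k}
    (hN : N ^ p = 0) : matExp k n p N ^ p = 1 := by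
  obtain ⟨q, hq⟩ : ∃ q, p = q + 1 :=
    ⟨p - 1, (Nat.sub_add_cancel (Fact.out : p.Prime).one_le).symm⟩
  set S := ∑ i ∈ range q, ((i + 1).factorial : k)⁻¹ • N ^ i
  have hExp : matExp k n p N = 1 + N * S := by
    rw [matExp, hq, sum_range_succ', mul_sum, add_comm]
    simp [pow_succ']
  have hNS : Commute N S := .sum_right _ _ _ fun i _ => (Commute.self_pow N i).smul_right _
  rw [hExp, add_pow_char_of_commute_of_algebra (k := k) (Commute.one_left _), one_pow,
    hNS.mul_pow, hN, zero_mul, add_zero]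

end TruncatedExp

section CommutingPowers

variable {M : Type*} [Monoid M] {r : ℕ}

theorem List.prod_ofFn_mul_of_commute (f g : Fin r → M) (h : ∀ i j, Commute (g i) (f j)) :
    (List.ofFn fun i => f i * g i).prod = (List.ofFn f).prod * (List.ofFn g).prod := by
  induction r with
  | zero => simp
  | succ r ih =>
    have hg : Commute (g 0) (List.ofFn fun i : Fin r => f i.succ).prod :=
      .list_prod_right _ _ fun y hy => by
        obtain ⟨i, rfl⟩ := List.mem_ofFn.mp hy
        exact h 0 i.succ
    simp only [List.ofFn_succ, List.prod_cons]
    rw [ih (fun i => f i.succ) (fun i => g i.succ) fun i j => h _ _, mul_assoc, mul_assoc,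
      ← mul_assoc (g 0), hg.eq, mul_assoc]

theorem prod_ofFn_pow_val_add {p : ℕ} [NeZero p] (E : Fin r → M) (hE : ∀ i, E i ^ p = 1)
    (hc : ∀ i j, Commute (E i) (E j)) (a b : Fin r → ZMod p) :
    (List.ofFn fun i => E i ^ ((a + b) i).val).prod =
      (List.ofFn fun i => E i ^ (a i).val).prod * (List.ofFn fun i => E i ^ (b i).val).prod := by
  rw [← List.prod_ofFn_mul_of_commute _ _ fun i j => (hc i j).pow_pow _ _]
  congr 1
  refine List.ofFn_inj.mpr (funext fun i => ?_)
  rw [Pi.add_apply, ZMod.val_add, ← pow_eq_pow_mod _ (hE i), pow_add]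

end CommutingPowers

theorem Finset.sum_range_mul_eq_sum_sum {β : Type*} [AddCommMonoid β] (f : ℕ → β) (a b : ℕ) :
    ∑ m ∈ range (a * b), f m = ∑ m ∈ range a, ∑ j ∈ range b, f (m + a * j) := by
  induction b with
  | zero => simp
  | succ b ih =>
    rw [mul_add_one, sum_range_add, ih, ← sum_add_distrib]
    exact sum_congr rfl fun m _ => by rw [sum_range_succ, add_comm (a * b)]

theorem prod_ofFn_sum_prime_pow_mul {S : Type*} [Semiring S] (p : ℕ) (F : ℕ → S)
    (h0 : F 0 = 1) (hF : ∀ r m j, m < p ^ r → F m * F (p ^ r * j) = F (m + p ^ r * j)) (r : ℕ) :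
    (List.ofFn fun i : Fin r => ∑ j ∈ range p, F (p ^ (i : ℕ) * j)).prod =
      ∑ m ∈ range (p ^ r), F m := by
  induction r with
  | zero => simp [h0]
  | succ r ih =>
    rw [List.ofFn_succ', List.prod_concat]
    simp only [Fin.val_castSucc, Fin.val_last]
    rw [ih, sum_mul_sum, pow_succ, sum_range_mul_eq_sum_sum]
    exact sum_congr rfl fun m hm => sum_congr rfl fun j _ => hF r m j (mem_range.mp hm)

theorem Polynomial.hasseDeriv_map {R S : Type*} [Semiring R] [Semiring S] (f : R →+* S)
    (b : ℕ) (q : R[X]) : hasseDeriv b (q.map f) = (hasseDeriv b q).map f := by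
  ext a
  simp [hasseDeriv_coeff]

section ExponentialMatrix

variable {k : Type*} [Field k] {n : ℕ}

/-- The coefficient of `T ^ a T' ^ b` in `q (T + T')`. -/
theorem coeff_coeff_aeval_C_X_add_X (q : k[X]) (a b : ℕ) :
    ((aeval (C X + X : k[X][X]) q).coeff b).coeff a =
      ((a + b).choose a : k) * q.coeff (a + b) := by
  have hTaylor : aeval (C X + X : k[X][X]) q = taylor X (q.map C) := by
    rw [taylor_apply, comp, eval₂_map, add_comm]
    rfl
  rw [hTaylor, taylor_coeff, hasseDeriv_map, eval_map, eval₂_C_X, hasseDeriv_coeff,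
    Nat.choose_symm_add]

theorem IsExpMat.isDividedPowerSeq_coeff {A : Matrix (Fin n) (Fin n) k[X]} (hA : IsExpMat A) :
    IsDividedPowerSeq k fun m => A.map (·.coeff m) := by
  obtain ⟨hmul, hzero⟩ := hA
  have haevalC (q : k[X]) : aeval (C X : k[X][X]) q = C q := by
    rw [← algebraMap_eq (R := k[X]), aeval_algebraMap_apply, aeval_X_left_apply]
  have haevalX (q : k[X]) : aeval (X : k[X][X]) q = q.map C := by
    rw [aeval_def]
    rfl
  refine ⟨by simpa only [coeff_zero_eq_eval_zero] using hzero, fun a b => ?_⟩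
  ext i j
  have hij := congrArg (fun q : k[X][X] => (q.coeff b).coeff a) (congrFun (congrFun hmul i) j)
  simp only [Matrix.map_apply, Matrix.mul_apply, haevalC, haevalX, coeff_coeff_aeval_C_X_add_X,
    finsetSum_coeff, coeff_C_mul, coeff_map, coeff_mul_C] at hij
  simp only [Matrix.mul_apply, Matrix.smul_apply, Matrix.map_apply, smul_eq_mul, hij]

theorem Matrix.eq_sum_range_X_pow_smul_map_C {m m' : Type*} (A : Matrix m m' k[X]) {M : ℕ}
    (hA : ∀ i j, (A i j).natDegree < M) :
    A = ∑ d ∈ range M, (X : k[X]) ^ d • (A.map (·.coeff d)).map C := by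
  ext i j : 1
  simp only [Matrix.sum_apply, Matrix.smul_apply, Matrix.map_apply, smul_eq_mul]
  exact ((A i j).as_sum_range_C_mul_X_pow' (hA i j)).trans
    (sum_congr rfl fun _ _ => mul_comm _ _)

theorem IsDividedPowerSeq.expT_prime_pow {p : ℕ} [Fact p.Prime] [CharP k p]
    {G : ℕ → Matrix (Fin n) (Fin n) k} (hG : IsDividedPowerSeq k G) (t : ℕ) :
    expT k n p (p ^ t) (G (p ^ t)) =
      ∑ j ∈ range p, (X : k[X]) ^ (p ^ t * j) • (G (p ^ t * j)).map C := by
  refine sum_congr rfl fun j hj => ?_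
  have hfac : (j.factorial : k) ≠ 0 := by
    rw [Ne, CharP.cast_eq_zero_iff k p, (Fact.out : p.Prime).dvd_factorial, not_le]
    exact mem_range.mp hj
  have hinv : C (j.factorial : k)⁻¹ * C (j.factorial : k) = 1 := by
    rw [← C_mul, inv_mul_cancel₀ hfac, C_1]
  ext a b : 1
  simp only [hG.pow_prime_pow, Matrix.smul_apply, Matrix.map_apply, smul_eq_mul, C_mul]
  linear_combination (X ^ (p ^ t * j) * C (G (p ^ t * j) a b)) * hinv

end ExponentialMatrix

theorem stmt_16_general {k : Type*} [Field k] {p : ℕ} (hp : p.Prime)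
    [CharP k p] {n : ℕ}
    (A : Matrix (Fin n) (Fin n) (Polynomial k)) (hA : IsExpMat A) :
    ∃ (r : ℕ) (N : Fin r → Matrix (Fin n) (Fin n) k),
      (∀ i, N i ^ p = 0) ∧ (∀ i j, Commute (N i) (N j)) ∧
      -- the corresponding ρ_{N₁,…,N_r} is a group homomorphism (ℤ/pℤ)^r → GL(n, k)
      (let ρ : (Fin r → ZMod p) → Matrix (Fin n) (Fin n) k :=
        fun a => (List.ofFn (fun i : Fin r => matExp k n p (N i) ^ (a i).val)).prod
       ρ 0 = 1 ∧ (∀ a b, ρ (a + b) = ρ a * ρ b) ∧ ∀ a, IsUnit (ρ a)) ∧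
      -- and π(ρ) = A
      A = (List.ofFn (fun i : Fin r => expT k n p (p ^ (i : ℕ)) (N i))).prod := by
  have : Fact p.Prime := ⟨hp⟩
  set G : ℕ → Matrix (Fin n) (Fin n) k := fun m => A.map (·.coeff m)
  have hG : IsDividedPowerSeq k G := hA.isDividedPowerSeq_coeff
  obtain ⟨D, hD⟩ : ∃ D, ∀ i j, (A i j).natDegree ≤ D :=
    ⟨univ.sup fun ij : Fin n × Fin n => (A ij.1 ij.2).natDegree,
      fun i j => le_sup (f := fun ij : Fin n × Fin n => (A ij.1 ij.2).natDegree)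
        (mem_univ (i, j))⟩
  have hE (i : ℕ) : matExp k n p (G (p ^ i)) ^ p = 1 :=
    matExp_pow_prime (hG.pow_prime_pow_prime i)
  refine ⟨D, fun i => G (p ^ (i : ℕ)), fun i => hG.pow_prime_pow_prime _,
    fun i j => hG.commute _ _, ⟨by simp, prod_ofFn_pow_val_add _ (fun i => hE i)
      (fun i j => (hG.commute _ _).matExp), fun a => List.prod_isUnit fun _ hmem => ?_⟩, ?_⟩
  · obtain ⟨i, rfl⟩ := List.mem_ofFn.mp hmem
    exact (IsUnit.of_pow_eq_one (hE i) hp.ne_zero).pow _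
  · rw [A.eq_sum_range_X_pow_smul_map_C
        fun i j => (hD i j).trans_lt (Nat.lt_pow_self hp.one_lt),
      ← prod_ofFn_sum_prime_pow_mul p (fun m => (X : k[X]) ^ m • (G m).map C) (by simp [hG.zero])
        (fun r m j hm => by rw [smul_mul_smul_comm, ← pow_add, ← Matrix.map_mul,
          hG.mul_prime_pow_mul hm])]
    simp only [hG.expT_prime_pow]

/-- The map `π : E_{≥0}(n, k) → Mat(n, k[T])^E`, sending
`ρ_{N₁,…,N_r} : (ℤ/pℤ)^r → GL(n, k)` to `∏_{i=1}^r Exp(T^{p^{i-1}} N_i)`, is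
surjective: every exponential matrix arises from some group homomorphism
`(ℤ/pℤ)^r → GL(n, k)`. -/
theorem stmt_16 {k : Type*} [Field k] [IsAlgClosed k] {p : ℕ} (hp : p.Prime)
    [CharP k p] {n : ℕ}
    (A : Matrix (Fin n) (Fin n) (Polynomial k)) (hA : IsExpMat A) :
    ∃ (r : ℕ) (N : Fin r → Matrix (Fin n) (Fin n) k),
      (∀ i, N i ^ p = 0) ∧ (∀ i j, Commute (N i) (N j)) ∧
      -- the corresponding ρ_{N₁,…,N_r} is a group homomorphism (ℤ/pℤ)^r → GL(n, k)
      (let ρ : (Fin r → ZMod p) → Matrix (Fin n) (Fin n) k :=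
        fun a => (List.ofFn (fun i : Fin r => matExp k n p (N i) ^ (a i).val)).prod
       ρ 0 = 1 ∧ (∀ a b, ρ (a + b) = ρ a * ρ b) ∧ ∀ a, IsUnit (ρ a)) ∧
      -- and π(ρ) = A
      A = (List.ofFn (fun i : Fin r => expT k n p (p ^ (i : ℕ)) (N i))).prod :=
  stmt_16_general hp A hA
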